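/- Suppose z_1 < z_2 < ... < z_n are real numbers and y ∈ ℝ^n. For each u ∈ ℝ^n, let 𝒫(u) be the set of minimizers of P ↦ Σ_{i,j} (z_i − u_j)^2 P_{ij} over the scaled Birkhoff polytope B(n,n). Then the infimum of (1/n) Σ_{i=1}^n (y_i − ŷ_i)^2 over all ŷ of the form ŷ = nPu with u ∈ ℝ^n and P ∈ 𝒫(u) equals the minimum of (1/n) Σ_{i=1}^n (y_i − v_i)^2 over all nondecreasing vectors v ∈ ℝ^n (i.e., the optimal value of standard isotonic regression). -/

import Mathlib

/-!
On `B(n,k)` both marginal terms of the quadratic cost `Σ (z_i - u_j)² P_ij` are fixed, so a plan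
is optimal iff it maximizes the correlation `z ⬝ᵥ P u`. Moving mass `ε` from the cells `(i,j)`,
`(i',j')` to `(i,j')`, `(i',j)` changes that correlation by `ε (z_i - z_i') (u_j' - u_j)`; hence
for `z` strictly increasing an optimal plan only couples rows `i < i'` to columns with
`u_j ≤ u_j'`, and each fitted value `n (P u)_i` is a weighted mean over its row, so `n P u` is
nondecreasing. Conversely, for nondecreasing `v` the plan `I / n` is optimal: by Birkhoff's theorem
`n Q` is a convex combination of permutation matrices, and the rearrangement inequality bounds the
correlation of each of them by `z ⬝ᵥ v`. So both infima range over the same set of values.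
-/

/-- The scaled Birkhoff polytope `B(n,k)`: nonnegative matrices whose rows sum
to `1/n` and whose columns sum to `1/k`. -/
def scaledBirkhoff (n k : ℕ) : Set (Matrix (Fin n) (Fin k) ℝ) :=
  {P | (∀ i j, 0 ≤ P i j) ∧ (∀ i, ∑ j, P i j = 1 / n) ∧ (∀ j, ∑ i, P i j = 1 / k)}

/-- The transport cost `Σ_{i,j} C_{ij} P_{ij}` with `C_{ij} = (z_i − u_j)^2`. -/
def transportCost {n k : ℕ} (z : Fin n → ℝ) (u : Fin k → ℝ)
    (P : Matrix (Fin n) (Fin k) ℝ) : ℝ :=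
  ∑ i, ∑ j, (z i - u j) ^ 2 * P i j

open Finset Matrix

section

variable {n k : ℕ}

theorem transportCost_eq {z : Fin n → ℝ} {u : Fin k → ℝ} {P : Matrix (Fin n) (Fin k) ℝ}
    (hP : P ∈ scaledBirkhoff n k) :
    transportCost z u P = (∑ i, z i ^ 2) / n + (∑ j, u j ^ 2) / k - 2 * (z ⬝ᵥ (P *ᵥ u)) := by
  obtain ⟨-, hrow, hcol⟩ := hP
  have h : ∀ i j, (z i - u j) ^ 2 * P i j =
      z i ^ 2 * P i j + u j ^ 2 * P i j - 2 * (z i * (P i j * u j)) := fun i j => by ring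
  simp only [transportCost, h, sum_add_distrib, sum_sub_distrib, ← mul_sum,
    sum_comm (f := fun i j => u j ^ 2 * P i j), hrow, hcol, dotProduct, mulVec]
  simp only [← sum_div, mul_one_div]

theorem isMinOn_transportCost_iff {z : Fin n → ℝ} {u : Fin k → ℝ} {P : Matrix (Fin n) (Fin k) ℝ}
    (hP : P ∈ scaledBirkhoff n k) :
    IsMinOn (transportCost z u) (scaledBirkhoff n k) P ↔
      ∀ Q ∈ scaledBirkhoff n k, z ⬝ᵥ (Q *ᵥ u) ≤ z ⬝ᵥ (P *ᵥ u) := by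
  refine isMinOn_iff.trans (forall₂_congr fun Q hQ => ?_)
  rw [transportCost_eq hP, transportCost_eq hQ]
  constructor <;> intro h <;> linarith

theorem add_smul_vecMulVec_mem_scaledBirkhoff {P : Matrix (Fin n) (Fin k) ℝ}
    (hP : P ∈ scaledBirkhoff n k) {i i' : Fin n} {j j' : Fin k} (hi : i ≠ i') (hj : j ≠ j') :
    P + min (P i j) (P i' j') •
      vecMulVec (Pi.single i 1 - Pi.single i' 1) (Pi.single j' 1 - Pi.single j 1) ∈
        scaledBirkhoff n k := by
  obtain ⟨hnn, hrow, hcol⟩ := hP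
  refine ⟨fun a b => ?_, fun a => ?_, fun b => ?_⟩
  · have := min_le_left (P i j) (P i' j')
    have := min_le_right (P i j) (P i' j')
    have := le_min (hnn i j) (hnn i' j')
    simp only [Matrix.add_apply, Matrix.smul_apply, vecMulVec_apply, Pi.sub_apply,
      Pi.single_apply, smul_eq_mul]
    split_ifs <;> subst_vars <;>
      first | exact absurd rfl hi | exact absurd rfl hj | linarith [hnn a b]
  · simp [sum_add_distrib, vecMulVec_apply, ← mul_sum, sum_sub_distrib, hrow]
  · simp [sum_add_distrib, vecMulVec_apply, ← sum_mul, ← mul_sum, sum_sub_distrib, hcol]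

theorem le_of_isMinOn_transportCost {z : Fin n → ℝ} {u : Fin k → ℝ}
    {P : Matrix (Fin n) (Fin k) ℝ} (hP : P ∈ scaledBirkhoff n k)
    (hmin : IsMinOn (transportCost z u) (scaledBirkhoff n k) P) {i i' : Fin n} {j j' : Fin k}
    (hz : z i < z i') (hij : 0 < P i j) (hij' : 0 < P i' j') : u j ≤ u j' := by
  by_contra! hu
  have hi : i ≠ i' := by rintro rfl; exact hz.false
  have hj : j ≠ j' := by rintro rfl; exact hu.false
  have hQ := add_smul_vecMulVec_mem_scaledBirkhoff hP hi hj
  have key := (isMinOn_transportCost_iff hP).1 hmin _ hQ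
  simp only [add_mulVec, smul_mulVec, vecMulVec_mulVec, dotProduct_add, dotProduct_smul,
    dotProduct_sub, sub_dotProduct, dotProduct_single, single_dotProduct, mul_one, one_mul,
    smul_eq_mul, op_smul_eq_smul] at key
  have hε : 0 < min (P i j) (P i' j') := lt_min hij hij'
  nlinarith [mul_pos hε (mul_pos (sub_pos.2 hz) (sub_pos.2 hu))]

theorem sum_mul_dotProduct_le_sum_mul_dotProduct {ι : Type*} [Fintype ι] {p q u : ι → ℝ}
    (hp : ∀ j, 0 ≤ p j) (hq : ∀ j, 0 ≤ q j) (hpq : ∀ j j', 0 < p j → 0 < q j' → u j ≤ u j') :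
    (∑ j, q j) * (p ⬝ᵥ u) ≤ (∑ j, p j) * (q ⬝ᵥ u) := by
  simp only [dotProduct, sum_mul_sum]
  rw [sum_comm]
  refine sum_le_sum fun j _ => sum_le_sum fun j' _ => ?_
  rcases (hp j).eq_or_lt with h | h
  · simp [← h]
  rcases (hq j').eq_or_lt with h' | h'
  · simp [← h']
  nlinarith [mul_pos h h', hpq j j' h h']

theorem monotone_mulVec_of_isMinOn_transportCost {z : Fin n → ℝ} {u : Fin k → ℝ}
    {P : Matrix (Fin n) (Fin k) ℝ} (hz : StrictMono z) (hP : P ∈ scaledBirkhoff n k)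
    (hmin : IsMinOn (transportCost z u) (scaledBirkhoff n k) P) : Monotone (P *ᵥ u) := by
  intro i i' hii'
  rcases hii'.eq_or_lt with rfl | hlt
  · exact le_rfl
  have h := sum_mul_dotProduct_le_sum_mul_dotProduct (hP.1 i) (hP.1 i')
    fun j j' hj hj' => le_of_isMinOn_transportCost hP hmin (hz hlt) hj hj'
  have hn : (0 : ℝ) < 1 / n := one_div_pos.2 (Nat.cast_pos.2 i.pos)
  rw [hP.2.1 i, hP.2.1 i'] at h
  exact le_of_mul_le_mul_left h hn

theorem dotProduct_mulVec_le_of_mem_doublyStochastic {ι : Type*} [Fintype ι] [DecidableEq ι]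
    {M : Matrix ι ι ℝ} (hM : M ∈ doublyStochastic ℝ ι) {z v : ι → ℝ} (hzv : Monovary z v) :
    z ⬝ᵥ (M *ᵥ v) ≤ z ⬝ᵥ v := by
  obtain ⟨w, hw0, hw1, rfl⟩ := exists_eq_sum_perm_of_mem_doublyStochastic hM
  calc z ⬝ᵥ ((∑ σ, w σ • σ.permMatrix ℝ) *ᵥ v)
      = ∑ σ, w σ * ∑ i, z i * v (σ i) := by
        simp only [sum_mulVec, dotProduct_sum, smul_mulVec, permMatrix_mulVec, dotProduct_smul,
          smul_eq_mul]
        rfl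
    _ ≤ ∑ σ, w σ * ∑ i, z i * v i :=
        sum_le_sum fun σ _ => mul_le_mul_of_nonneg_left hzv.sum_mul_comp_perm_le_sum_mul (hw0 σ)
    _ = z ⬝ᵥ v := by rw [← sum_mul, hw1, one_mul, dotProduct]

theorem natCast_smul_mem_doublyStochastic {Q : Matrix (Fin n) (Fin n) ℝ}
    (hQ : Q ∈ scaledBirkhoff n n) : (n : ℝ) • Q ∈ doublyStochastic ℝ (Fin n) := by
  obtain ⟨hnn, hrow, hcol⟩ := hQ
  refine mem_doublyStochastic_iff_sum.2 ⟨fun i j => ?_, fun i => ?_, fun j => ?_⟩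
  · exact mul_nonneg n.cast_nonneg (hnn i j)
  · have : (n : ℝ) ≠ 0 := Nat.cast_ne_zero.2 i.pos.ne'
    simp [← mul_sum, hrow, this]
  · have : (n : ℝ) ≠ 0 := Nat.cast_ne_zero.2 j.pos.ne'
    simp [← mul_sum, hcol, this]

theorem inv_natCast_smul_one_mem_scaledBirkhoff :
    ((n : ℝ)⁻¹ • 1 : Matrix (Fin n) (Fin n) ℝ) ∈ scaledBirkhoff n n := by
  refine ⟨fun i j => ?_, fun i => ?_, fun j => ?_⟩
  · exact mul_nonneg (by positivity) (zero_le_one_elem i j)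
  · simp [one_apply]
  · simp [one_apply]

theorem isMinOn_transportCost_inv_natCast_smul_one {z v : Fin n → ℝ} (hz : Monotone z)
    (hv : Monotone v) :
    IsMinOn (transportCost z v) (scaledBirkhoff n n) ((n : ℝ)⁻¹ • 1) := by
  refine (isMinOn_transportCost_iff inv_natCast_smul_one_mem_scaledBirkhoff).2 fun Q hQ => ?_
  rcases Nat.eq_zero_or_pos n with rfl | hn
  · simp [dotProduct]
  have h := dotProduct_mulVec_le_of_mem_doublyStochastic (natCast_smul_mem_doublyStochastic hQ)
    (hz.monovary hv)
  rw [smul_mulVec, dotProduct_smul, smul_eq_mul] at h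
  rw [smul_mulVec, one_mulVec, dotProduct_smul, smul_eq_mul, le_inv_mul_iff₀ (by positivity)]
  exact h

end

theorem brenierIR_1d_equals_isotonic_general (n : ℕ)
    (z : Fin n → ℝ) (hz : StrictMono z) (y : Fin n → ℝ) :
    sInf {c : ℝ | ∃ (u : Fin n → ℝ) (P : Matrix (Fin n) (Fin n) ℝ),
        P ∈ scaledBirkhoff n n ∧
        (∀ Q ∈ scaledBirkhoff n n, transportCost z u P ≤ transportCost z u Q) ∧
        c = (1 / (n : ℝ)) * ∑ i, (y i - (n : ℝ) * ∑ j, P i j * u j) ^ 2} =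
    sInf {c : ℝ | ∃ v : Fin n → ℝ, Monotone v ∧
        c = (1 / (n : ℝ)) * ∑ i, (y i - v i) ^ 2} := by
  congr 1
  ext c
  constructor
  · rintro ⟨u, P, hP, hmin, rfl⟩
    have hmono := monotone_mulVec_of_isMinOn_transportCost hz hP (isMinOn_iff.2 hmin)
    exact ⟨_, hmono.const_mul n.cast_nonneg, rfl⟩
  · rintro ⟨v, hv, rfl⟩
    refine ⟨v, _, inv_natCast_smul_one_mem_scaledBirkhoff,
      isMinOn_iff.1 (isMinOn_transportCost_inv_natCast_smul_one hz.monotone hv), ?_⟩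
    congr! with i
    have hn : (n : ℝ) ≠ 0 := Nat.cast_ne_zero.2 i.pos.ne'
    simp [one_apply, hn]

/-- Brenier isotonic regression in 1D achieves exactly the
optimal value of standard isotonic regression. -/
theorem brenierIR_1d_equals_isotonic (n : ℕ) (hn : 0 < n)
    (z : Fin n → ℝ) (hz : StrictMono z) (y : Fin n → ℝ) :
    sInf {c : ℝ | ∃ (u : Fin n → ℝ) (P : Matrix (Fin n) (Fin n) ℝ),
        P ∈ scaledBirkhoff n n ∧
        (∀ Q ∈ scaledBirkhoff n n, transportCost z u P ≤ transportCost z u Q) ∧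
        c = (1 / (n : ℝ)) * ∑ i, (y i - (n : ℝ) * ∑ j, P i j * u j) ^ 2} =
    sInf {c : ℝ | ∃ v : Fin n → ℝ, Monotone v ∧
        c = (1 / (n : ℝ)) * ∑ i, (y i - v i) ^ 2} :=
  brenierIR_1d_equals_isotonic_general n z hz y
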